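/- arXiv:1810.02711 — 8 statements merged into one kernel-verified Lean document; each statement's English description precedes it below -/
import Mathlib

section
/- Let I be an SMTI instance, let i be a child, and let 𝓕 be a set of families such that (i,j) ∈ A for every j ∈ 𝓕. Let 𝓒 = ⋃_{j∈𝓕} T_j(i). If |𝓕| ≥ |𝓒|, then in every stable matching M of I, child i is matched, and r(i, M(i)) ≤ max_{j∈𝓕} r(i,j). -/
/-- A matching in an SMTI instance with acceptable pairs `A`: a subset of `A` in which
each child and each family appears in at most one pair. -/
def IsMatching {C F : Type*} (A M : Finset (C × F)) : Prop :=
  M ⊆ A ∧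
  (∀ p ∈ M, ∀ q ∈ M, p.1 = q.1 → p = q) ∧
  (∀ p ∈ M, ∀ q ∈ M, p.2 = q.2 → p = q)

/-- The acceptable pair `(i, j)` blocks the matching `M`:
(a) `i` is unmatched in `M` or strictly prefers `j` to its partner, and
(b) `j` is unmatched in `M` or strictly prefers `i` to its partner.
Smaller rank is more preferred. -/
def Blocks {C F : Type*} (r r' : C → F → ℕ) (M : Finset (C × F)) (i : C) (j : F) : Prop :=
  ((∀ j', (i, j') ∉ M) ∨ ∃ j', (i, j') ∈ M ∧ r i j < r i j') ∧
  ((∀ i', (i', j) ∉ M) ∨ ∃ i', (i', j) ∈ M ∧ r' i j < r' i' j)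

/-- `M` is a stable matching: a matching admitting no blocking acceptable pair. -/
def IsStable {C F : Type*} (A : Finset (C × F)) (r r' : C → F → ℕ)
    (M : Finset (C × F)) : Prop :=
  IsMatching A M ∧ ∀ i j, (i, j) ∈ A → (i, j) ∉ M → ¬ Blocks r r' M i j

/-- Theorem 1 of the paper.  Let `i` be a child and `𝓕` a set of families
all acceptable for `i`, and let `𝓒 = ⋃_{j ∈ 𝓕} T_j(i)`, where
`T_j(i) = { i' : (i', j) ∈ A ∧ r'(i', j) ≤ r'(i, j) }`.  If `|𝓕| ≥ |𝓒|`, then in every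
stable matching `M`, child `i` is matched to a family `j'` with
`r(i, j') ≤ max_{j ∈ 𝓕} r(i, j)`. -/
theorem smti_preprocessing {C F : Type*} [Fintype C] [DecidableEq C] [DecidableEq F]
    (A : Finset (C × F)) (r r' : C → F → ℕ)
    (hr : ∀ p ∈ A, 1 ≤ r p.1 p.2) (hr' : ∀ p ∈ A, 1 ≤ r' p.1 p.2)
    (i : C) (𝓕 : Finset F) (h𝓕 : 𝓕.Nonempty)
    (hacc : ∀ j ∈ 𝓕, (i, j) ∈ A)
    (hcard : (𝓕.biUnion fun j =>
        Finset.univ.filter fun i' => (i', j) ∈ A ∧ r' i' j ≤ r' i j).card ≤ 𝓕.card)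
    (M : Finset (C × F)) (hM : IsStable A r r' M) :
    ∃ j', (i, j') ∈ M ∧ r i j' ≤ 𝓕.sup' h𝓕 (r i) := by
  classical
  by_contra h
  push_neg at h
  obtain ⟨⟨hMA, hM1, hM2⟩, hstab⟩ := hM
  set 𝓒 := 𝓕.biUnion (fun j =>
      Finset.univ.filter fun i' => (i', j) ∈ A ∧ r' i' j ≤ r' i j) with h𝓒
  have key : ∀ j ∈ 𝓕, ∃ i', (i', j) ∈ M ∧ r' i' j ≤ r' i j := by
    intro j hj
    have hij : (i, j) ∉ M := fun hmem =>
      absurd (Finset.le_sup' (r i) hj) (not_le.mpr (h j hmem))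
    have hnb := hstab i j (hacc j hj) hij
    have ha : (∀ j', (i, j') ∉ M) ∨ ∃ j', (i, j') ∈ M ∧ r i j < r i j' := by
      by_cases hm : ∃ j', (i, j') ∈ M
      · obtain ⟨j', hj'⟩ := hm
        exact Or.inr ⟨j', hj', lt_of_le_of_lt (Finset.le_sup' (r i) hj) (h j' hj')⟩
      · push_neg at hm; exact Or.inl hm
    have hb : ¬ ((∀ i', (i', j) ∉ M) ∨ ∃ i', (i', j) ∈ M ∧ r' i j < r' i' j) :=
      fun hb => hnb ⟨ha, hb⟩
    push_neg at hb
    obtain ⟨⟨i', hi'⟩, hall⟩ := hb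
    exact ⟨i', hi', hall i' hi'⟩
  choose f hf1 hf2 using key
  have hfmem : ∀ j (hj : j ∈ 𝓕), f j hj ∈ 𝓒.erase i := by
    intro j hj
    refine Finset.mem_erase.mpr ⟨?_, ?_⟩
    · intro heq
      have hij : (i, j) ∉ M := fun hmem =>
        absurd (Finset.le_sup' (r i) hj) (not_le.mpr (h j hmem))
      exact hij (heq ▸ hf1 j hj)
    · rw [h𝓒]
      exact Finset.mem_biUnion.mpr ⟨j, hj,
        Finset.mem_filter.mpr ⟨Finset.mem_univ _, hMA (hf1 j hj), hf2 j hj⟩⟩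
  -- injectivity via the attach map
  have hinj : ∀ a ∈ 𝓕.attach, ∀ b ∈ 𝓕.attach,
      f a.1 a.2 = f b.1 b.2 → a = b := by
    intro a _ b _ heq
    have := hM1 (f a.1 a.2, a.1) (hf1 a.1 a.2) (f b.1 b.2, b.1) (heq ▸ hf1 b.1 b.2) heq
    exact Subtype.ext (congrArg Prod.snd this)
  have hcard2 : 𝓕.card ≤ (𝓒.erase i).card := by
    have := Finset.card_le_card_of_injOn (fun a : {x // x ∈ 𝓕} => f a.1 a.2)
      (fun a _ => hfmem a.1 a.2) hinj
    simpa using this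
  have hiC : i ∈ 𝓒 := by
    obtain ⟨j₀, hj₀⟩ := h𝓕
    exact Finset.mem_biUnion.mpr ⟨j₀, hj₀,
      Finset.mem_filter.mpr ⟨Finset.mem_univ _, hacc j₀ hj₀, le_refl _⟩⟩
  have : 𝓒.card ≤ 𝓒.card - 1 := le_trans hcard (le_trans hcard2
    (le_of_eq (Finset.card_erase_of_mem hiC)))
  have hpos : 0 < 𝓒.card := Finset.card_pos.mpr ⟨i, hiC⟩
  omega
end

section
/- Let I be an SMTI instance, let i be a child, and let 𝓕 be a set of families such that (i,j) ∈ A for every j ∈ 𝓕, and suppose |𝓕| ≥ |⋃_{j∈𝓕} T_j(i)|. Then no stable matching of I contains an acceptable pair (i,j') with r(i,j') > max_{j∈𝓕} r(i,j); hence all such pairs may be deleted from A without changing the set of stable matchings. -/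
/-- Core counting argument: if `M ⊆ A` is a matching, every `j ∈ 𝓕` is matched in `M`
to a child other than `i` who is at least as good as `i` for `j`, then the union of
the `T_j(i)` has cardinality at least `|𝓕| + 1`, contradicting `hcard`. -/
lemma smti_core {C F : Type*} [Fintype C] [DecidableEq C] [DecidableEq F]
    (A M : Finset (C × F)) (r' : C → F → ℕ) (i : C) (𝓕 : Finset F) (h𝓕 : 𝓕.Nonempty)
    (hMA : M ⊆ A)
    (hM1 : ∀ p ∈ M, ∀ q ∈ M, p.1 = q.1 → p = q)
    (hacc : ∀ j ∈ 𝓕, (i, j) ∈ A)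
    (hex : ∀ j ∈ 𝓕, ∃ i', (i', j) ∈ M ∧ r' i' j ≤ r' i j ∧ i' ≠ i)
    (hcard : (𝓕.biUnion fun j =>
        Finset.univ.filter fun i' => (i', j) ∈ A ∧ r' i' j ≤ r' i j).card ≤ 𝓕.card) :
    False := by
  classical
  set T := 𝓕.biUnion fun j =>
      Finset.univ.filter fun i' => (i', j) ∈ A ∧ r' i' j ≤ r' i j with hT
  have hiT : i ∈ T := by
    obtain ⟨j, hj⟩ := h𝓕
    refine Finset.mem_biUnion.2 ⟨j, hj, ?_⟩
    simp [hacc j hj]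
  -- choice function
  have hf : ∀ j : F, j ∈ 𝓕 → ∃ i', (i', j) ∈ M ∧ r' i' j ≤ r' i j ∧ i' ≠ i := hex
  let f : F → C := fun j =>
    if h : ∃ i', (i', j) ∈ M ∧ r' i' j ≤ r' i j ∧ i' ≠ i then h.choose else i
  have hfspec : ∀ j ∈ 𝓕, (f j, j) ∈ M ∧ r' (f j) j ≤ r' i j ∧ f j ≠ i := by
    intro j hj
    have h := hf j hj
    simp only [f, dif_pos h]
    exact h.choose_spec
  have hmap : ∀ j ∈ 𝓕, f j ∈ T.erase i := by
    intro j hj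
    obtain ⟨hmem, hle, hne⟩ := hfspec j hj
    refine Finset.mem_erase.2 ⟨hne, ?_⟩
    refine Finset.mem_biUnion.2 ⟨j, hj, ?_⟩
    simp [hMA hmem, hle]
  have hinj : Set.InjOn f 𝓕 := by
    intro j1 hj1 j2 hj2 heq
    have h1 := (hfspec j1 hj1).1
    have h2 := (hfspec j2 hj2).1
    have := hM1 _ h1 _ h2 (by simpa using heq)
    simpa using congrArg Prod.snd this
  have hle : 𝓕.card ≤ (T.erase i).card :=
    Finset.card_le_card_of_injOn f hmap hinj
  have := Finset.card_erase_of_mem hiT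
  have hpos : 1 ≤ T.card := Finset.card_pos.2 ⟨i, hiT⟩
  omega

/-- Let `i` be a child and `𝓕` a set of families all acceptable for `i`,
with `|𝓕| ≥ |⋃_{j ∈ 𝓕} T_j(i)|`.  Then no stable matching contains an acceptable pair
`(i, j')` with `r(i, j') > max_{j ∈ 𝓕} r(i, j)`; hence deleting all such pairs from `A`
does not change the set of stable matchings. -/
theorem smti_preprocessing_removal {C F : Type*} [Fintype C] [DecidableEq C] [DecidableEq F]
    (A : Finset (C × F)) (r r' : C → F → ℕ)
    (hr : ∀ p ∈ A, 1 ≤ r p.1 p.2) (hr' : ∀ p ∈ A, 1 ≤ r' p.1 p.2)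
    (i : C) (𝓕 : Finset F) (h𝓕 : 𝓕.Nonempty)
    (hacc : ∀ j ∈ 𝓕, (i, j) ∈ A)
    (hcard : (𝓕.biUnion fun j =>
        Finset.univ.filter fun i' => (i', j) ∈ A ∧ r' i' j ≤ r' i j).card ≤ 𝓕.card) :
    (∀ M, IsStable A r r' M → ∀ j', (i, j') ∈ A → 𝓕.sup' h𝓕 (r i) < r i j' →
      (i, j') ∉ M) ∧
    (∀ M, IsStable (A.filter fun p => ¬ (p.1 = i ∧ 𝓕.sup' h𝓕 (r i) < r i p.2)) r r' M ↔
      IsStable A r r' M) := by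
  classical
  have part1 : ∀ M, IsStable A r r' M → ∀ j', (i, j') ∈ A → 𝓕.sup' h𝓕 (r i) < r i j' →
      (i, j') ∉ M := by
    intro M ⟨⟨hMA, hM1, hM2⟩, hstab⟩ j' hj'A hsup hmem
    refine smti_core A M r' i 𝓕 h𝓕 hMA hM1 hacc ?_ hcard
    intro j hj
    have hrle : r i j ≤ 𝓕.sup' h𝓕 (r i) := Finset.le_sup' _ hj
    have hijM : (i, j) ∉ M := by
      intro h
      have := hM1 _ h _ hmem rfl
      have hj'j : j = j' := by simpa using congrArg Prod.snd this
      subst hj'j; omega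
    have hnb := hstab i j (hacc j hj) hijM
    rw [Blocks] at hnb
    push_neg at hnb
    have h2 := hnb (Or.inr ⟨j', hmem, by omega⟩)
    obtain ⟨⟨i', hi'M⟩, hall⟩ := h2
    exact ⟨i', hi'M, hall i' hi'M, fun h => hijM (h ▸ hi'M)⟩
  refine ⟨part1, fun M => ⟨?_, ?_⟩⟩
  · -- stable on filtered ⇒ stable on A
    rintro ⟨⟨hMA', hM1, hM2⟩, hstab⟩
    have hMA : M ⊆ A := fun p hp => Finset.mem_filter.1 (hMA' hp) |>.1
    refine ⟨⟨hMA, hM1, hM2⟩, ?_⟩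
    intro i0 j0 hA hnm hB
    by_cases hA' : (i0, j0) ∈ A.filter fun p => ¬ (p.1 = i ∧ 𝓕.sup' h𝓕 (r i) < r i p.2)
    · exact hstab i0 j0 hA' hnm hB
    · have hrem : i0 = i ∧ 𝓕.sup' h𝓕 (r i) < r i j0 := by
        have := Finset.mem_filter.not.1 hA'
        push_neg at this
        simpa using this hA
      have heq : i = i0 := hrem.1.symm
      have hsup := hrem.2
      subst heq
      obtain ⟨hB1, hB2⟩ := hB
      -- i is not matched to any j ∈ 𝓕
      have hnotM : ∀ j ∈ 𝓕, (i, j) ∉ M := by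
        intro j hj hmem
        rcases hB1 with h | ⟨j'', hj''M, hlt⟩
        · exact h j hmem
        · have := hM1 _ hmem _ hj''M rfl
          have : j = j'' := by simpa using congrArg Prod.snd this
          subst this
          have hrle : r i j ≤ 𝓕.sup' h𝓕 (r i) := Finset.le_sup' _ hj
          omega
      refine smti_core A M r' i 𝓕 h𝓕 hMA hM1 hacc ?_ hcard
      intro j hj
      have hrle : r i j ≤ 𝓕.sup' h𝓕 (r i) := Finset.le_sup' _ hj
      have hjA' : (i, j) ∈ A.filter fun p => ¬ (p.1 = i ∧ 𝓕.sup' h𝓕 (r i) < r i p.2) := by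
        refine Finset.mem_filter.2 ⟨hacc j hj, ?_⟩
        simp only [not_and]
        intro _; omega
      have hnb := hstab i j hjA' (hnotM j hj)
      rw [Blocks] at hnb
      push_neg at hnb
      have hfirst : (∀ j', (i, j') ∉ M) ∨ ∃ j', (i, j') ∈ M ∧ r i j < r i j' := by
        rcases hB1 with h | ⟨j'', hj''M, hlt⟩
        · exact Or.inl h
        · exact Or.inr ⟨j'', hj''M, by omega⟩
      obtain ⟨⟨i', hi'M⟩, hall⟩ := hnb hfirst
      exact ⟨i', hi'M, hall i' hi'M, fun h => hnotM j hj (h ▸ hi'M)⟩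
  · -- stable on A ⇒ stable on filtered
    intro hst
    obtain ⟨⟨hMA, hM1, hM2⟩, hstab⟩ := hst
    have hMA' : M ⊆ A.filter fun p => ¬ (p.1 = i ∧ 𝓕.sup' h𝓕 (r i) < r i p.2) := by
      intro p hp
      refine Finset.mem_filter.2 ⟨hMA hp, ?_⟩
      rintro ⟨h1, h2⟩
      have : (i, p.2) ∈ M := by rwa [← h1, Prod.mk.eta]  -- p = (p.1, p.2)
      exact part1 M ⟨⟨hMA, hM1, hM2⟩, hstab⟩ p.2 (h1 ▸ hMA hp) h2 this
    refine ⟨⟨hMA', hM1, hM2⟩, ?_⟩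
    intro i0 j0 hA' hnm
    exact hstab i0 j0 (Finset.mem_filter.1 hA').1 hnm
end

section
/- Let I be an SMTI instance, let 𝓒 be a set of children and 𝓕 a set of families such that for every family j ∈ 𝓕 the set of children ranked first by j is exactly 𝓒 (that is, { i ∈ C : (i,j) ∈ A and r'(i,j) = 1 } = 𝓒). If |𝓕| ≥ |𝓒|, then for every child i ∈ 𝓒 and every stable matching M of I, child i is matched in M and r(i, M(i)) ≤ max_{j∈𝓕} r(i,j). -/
/-- correctness of `first-rank-family`.  If every family `j ∈ 𝓕` has
exactly the set `𝓒` of children as its first-ranked (rank 1) children, and `|𝓕| ≥ |𝓒|`,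
then in every stable matching every child `i ∈ 𝓒` is matched, to a family `j'` with
`r(i, j') ≤ max_{j ∈ 𝓕} r(i, j)`. -/
theorem first_rank_family_correct {C F : Type*} [Fintype C] [DecidableEq C] [DecidableEq F]
    (A : Finset (C × F)) (r r' : C → F → ℕ)
    (hr : ∀ p ∈ A, 1 ≤ r p.1 p.2) (hr' : ∀ p ∈ A, 1 ≤ r' p.1 p.2)
    (𝓒 : Finset C) (𝓕 : Finset F)
    (hfirst : ∀ j ∈ 𝓕, (Finset.univ.filter fun i => (i, j) ∈ A ∧ r' i j = 1) = 𝓒)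
    (hcard : 𝓒.card ≤ 𝓕.card) :
    ∀ i ∈ 𝓒, ∀ M : Finset (C × F), IsStable A r r' M →
      ∃ j', (i, j') ∈ M ∧ r i j' ≤ 𝓕.sup (r i) := by
  classical
  intro i hi M hM
  by_contra hgoal
  push_neg at hgoal
  obtain ⟨⟨hMA, hc, hfam⟩, hstab⟩ := hM
  have key : ∀ j, ∃ i', j ∈ 𝓕 → i' ∈ 𝓒 ∧ (i', j) ∈ M := by
    intro j
    by_cases hj : j ∈ 𝓕
    · have hiA : (i, j) ∈ A ∧ r' i j = 1 := by
        have h1 : i ∈ Finset.univ.filter fun i => (i, j) ∈ A ∧ r' i j = 1 :=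
          (hfirst j hj) ▸ hi
        simpa using h1
      by_cases hmem : (i, j) ∈ M
      · exact absurd (Finset.le_sup (f := r i) hj) (not_le.2 (hgoal j hmem))
      · have hnb := hstab i j hiA.1 hmem
        rw [Blocks] at hnb
        have hP : (∀ j', (i, j') ∉ M) ∨ ∃ j', (i, j') ∈ M ∧ r i j < r i j' := by
          by_cases hm : ∃ j', (i, j') ∈ M
          · obtain ⟨j', hj'⟩ := hm
            exact Or.inr ⟨j', hj', lt_of_le_of_lt (Finset.le_sup (f := r i) hj)
              (hgoal j' hj')⟩
          · push_neg at hm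
            exact Or.inl hm
        have hQ : ¬ ((∀ i', (i', j) ∉ M) ∨ ∃ i', (i', j) ∈ M ∧ r' i j < r' i' j) :=
          fun q => hnb ⟨hP, q⟩
        push_neg at hQ
        obtain ⟨⟨i', hi'M⟩, hle⟩ := hQ
        have hi'A : (i', j) ∈ A := hMA hi'M
        have h1 : r' i' j = 1 := le_antisymm (hiA.2 ▸ hle i' hi'M) (hr' (i', j) hi'A)
        have hi'𝓒 : i' ∈ 𝓒 := by
          rw [← hfirst j hj]
          simp [hi'A, h1]
        exact ⟨i', fun _ => ⟨hi'𝓒, hi'M⟩⟩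
    · exact ⟨i, fun h => absurd h hj⟩
  choose f hfspec using key
  have hinj : Set.InjOn f 𝓕 := by
    intro j₁ hj₁ j₂ hj₂ heq
    have h₁ := (hfspec j₁ hj₁).2
    have h₂ := (hfspec j₂ hj₂).2
    have := hc (f j₁, j₁) h₁ (f j₂, j₂) h₂ heq
    exact congrArg Prod.snd this
  have himg : 𝓕.image f ⊆ 𝓒 := by
    intro x hx
    obtain ⟨j, hj, rfl⟩ := Finset.mem_image.1 hx
    exact (hfspec j hj).1
  have hcard' : 𝓒.card ≤ (𝓕.image f).card := by
    rw [Finset.card_image_of_injOn hinj]; exact hcard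
  have heq : 𝓕.image f = 𝓒 := Finset.eq_of_subset_of_card_le himg hcard'
  obtain ⟨j₀, hj₀, hfj₀⟩ := Finset.mem_image.1 (heq ▸ hi)
  have hiM : (i, j₀) ∈ M := hfj₀ ▸ (hfspec j₀ hj₀).2
  exact absurd (Finset.le_sup (f := r i) hj₀) (not_le.2 (hgoal j₀ hiM))
end

section
/- Let I be an SMTI instance, let j be a family, and let 𝓒 be a set of children such that (i,j) ∈ A for every i ∈ 𝓒. Let 𝓕 = ⋃_{i∈𝓒} S_i(j). If |𝓒| ≥ |𝓕|, then in every stable matching M of I, family j is matched, and r'(M(j), j) ≤ max_{i∈𝓒} r'(i,j). -/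
/-- family-side version of the preprocessing theorem.  Let `j` be a
family and `𝓒` a set of children all acceptable for `j`, and let
`𝓕 = ⋃_{i ∈ 𝓒} S_i(j)`, where `S_i(j) = { j' : (i, j') ∈ A ∧ r(i, j') ≤ r(i, j) }`.
If `|𝓒| ≥ |𝓕|`, then in every stable matching `M`, family `j` is matched to a child
`i'` with `r'(i', j) ≤ max_{i ∈ 𝓒} r'(i, j)`. -/
theorem smti_preprocessing_family_side {C F : Type*} [Fintype F] [DecidableEq C]
    [DecidableEq F]
    (A : Finset (C × F)) (r r' : C → F → ℕ)
    (hr : ∀ p ∈ A, 1 ≤ r p.1 p.2) (hr' : ∀ p ∈ A, 1 ≤ r' p.1 p.2)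
    (j : F) (𝓒 : Finset C) (h𝓒 : 𝓒.Nonempty)
    (hacc : ∀ i ∈ 𝓒, (i, j) ∈ A)
    (hcard : (𝓒.biUnion fun i =>
        Finset.univ.filter fun j' => (i, j') ∈ A ∧ r i j' ≤ r i j).card ≤ 𝓒.card)
    (M : Finset (C × F)) (hM : IsStable A r r' M) :
    ∃ i', (i', j) ∈ M ∧ r' i' j ≤ 𝓒.sup' h𝓒 (fun i => r' i j) := by
  classical
  obtain ⟨⟨hMA, hinj1, hinj2⟩, hstab⟩ := hM
  set 𝓕 := 𝓒.biUnion fun i =>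
      Finset.univ.filter fun j' => (i, j') ∈ A ∧ r i j' ≤ r i j with h𝓕
  by_cases hall : ∀ i ∈ 𝓒, ∃ j', (i, j') ∈ M ∧ r i j' ≤ r i j
  · -- every child in 𝓒 is matched within S_i(j); counting forces some i matched to j
    choose f hfM hfr using hall
    have hinj : Set.InjOn (fun i : {x // x ∈ 𝓒} => f i.1 i.2) Set.univ := by
      intro a _ b _ hab
      have := hinj2 _ (hfM a.1 a.2) _ (hfM b.1 b.2) hab
      exact Subtype.ext (congrArg Prod.fst this)
    -- image of 𝓒 under f
    have himg : (𝓒.attach.image fun i => f i.1 i.2) ⊆ 𝓕 := by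
      intro j' hj'
      obtain ⟨i, hi, rfl⟩ := Finset.mem_image.1 hj'
      refine Finset.mem_biUnion.2 ⟨i.1, i.2, Finset.mem_filter.2 ⟨Finset.mem_univ _,
        hMA (hfM i.1 i.2), hfr i.1 i.2⟩⟩
    have hcardimg : (𝓒.attach.image fun i => f i.1 i.2).card = 𝓒.card := by
      rw [Finset.card_image_of_injOn (fun a _ b _ h => hinj (Set.mem_univ a) (Set.mem_univ b) h),
        Finset.card_attach]
    have heq : (𝓒.attach.image fun i => f i.1 i.2) = 𝓕 :=
      Finset.eq_of_subset_of_card_le himg (by rw [hcardimg]; exact hcard)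
    have hjmem : j ∈ 𝓕 := by
      obtain ⟨i, hi⟩ := h𝓒
      exact Finset.mem_biUnion.2 ⟨i, hi, Finset.mem_filter.2 ⟨Finset.mem_univ _, hacc i hi, le_rfl⟩⟩
    rw [← heq] at hjmem
    obtain ⟨i, _, hfi⟩ := Finset.mem_image.1 hjmem
    refine ⟨i.1, hfi ▸ hfM i.1 i.2, Finset.le_sup' (fun i => r' i j) i.2⟩
  · push_neg at hall
    obtain ⟨i, hi, hbad⟩ := hall
    have hiM : (i, j) ∉ M := fun h => lt_irrefl _ (hbad j h)
    have hnb := hstab i j (hacc i hi) hiM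
    rw [Blocks] at hnb
    push_neg at hnb
    have condA : (∀ j', (i, j') ∉ M) ∨ ∃ j', (i, j') ∈ M ∧ r i j < r i j' := by
      by_cases hu : ∀ j', (i, j') ∉ M
      · exact Or.inl hu
      · push_neg at hu
        obtain ⟨j', hj'⟩ := hu
        exact Or.inr ⟨j', hj', hbad j' hj'⟩
    obtain ⟨hm, hle⟩ := hnb condA
    obtain ⟨i', hi'⟩ := hm
    exact ⟨i', hi', le_trans (hle i' hi') (Finset.le_sup' (fun i => r' i j) hi)⟩
end

section
/- Let M be a matching in an SMTI instance. For each child i and each positive integer k define y_{ik} = 1 if i is matched in M to a family j'' with r(i,j'') ≤ k and y_{ik} = 0 otherwise; for each family j and each positive integer k define y'_{jk} = 1 if j is matched in M to a child i'' with r'(i'',j) ≤ k and y'_{jk} = 0 otherwise. Then M is stable if and only if for every acceptable pair (i,j) ∈ A we have 1 − y_{i, r(i,j)} ≤ y'_{j, r'(i,j)}. -/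
/-- correctness of the dummy-variable stability constraints (13).
With `y_{ik} = 1` iff child `i` is matched in `M` at rank at most `k`, and `y'_{jk} = 1`
iff family `j` is matched in `M` at rank at most `k`, the matching `M` is stable iff for
every acceptable pair `(i, j)`, `1 - y_{i, r(i,j)} ≤ y'_{j, r'(i,j)}`. -/
theorem dummy_variable_stability_correct {C F : Type*} [Fintype C] [Fintype F]
    [DecidableEq C] [DecidableEq F]
    (A : Finset (C × F)) (r r' : C → F → ℕ)
    (hr : ∀ p ∈ A, 1 ≤ r p.1 p.2) (hr' : ∀ p ∈ A, 1 ≤ r' p.1 p.2)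
    (M : Finset (C × F)) (hM : IsMatching A M)
    (y : C → ℕ → ℤ) (y' : F → ℕ → ℤ)
    (hy : ∀ i k, y i k = if ∃ j'', (i, j'') ∈ M ∧ r i j'' ≤ k then 1 else 0)
    (hy' : ∀ j k, y' j k = if ∃ i'', (i'', j) ∈ M ∧ r' i'' j ≤ k then 1 else 0) :
    IsStable A r r' M ↔ ∀ i j, (i, j) ∈ A → 1 - y i (r i j) ≤ y' j (r' i j) := by
  constructor
  · rintro ⟨-, hstab⟩ i j hA
    rw [hy, hy']
    by_cases hyi : ∃ j'', (i, j'') ∈ M ∧ r i j'' ≤ r i j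
    · simp only [hyi, if_true]; split <;> norm_num
    · by_cases hyj : ∃ i'', (i'', j) ∈ M ∧ r' i'' j ≤ r' i j
      · simp only [hyj, if_true]; split <;> norm_num
      · exfalso
        have hijM : (i, j) ∉ M := fun h => hyi ⟨j, h, le_refl _⟩
        apply hstab i j hA hijM
        constructor
        · by_cases hm : ∃ j', (i, j') ∈ M
          · obtain ⟨j', hj'⟩ := hm
            exact Or.inr ⟨j', hj', lt_of_not_ge fun h => hyi ⟨j', hj', h⟩⟩
          · exact Or.inl fun j' h => hm ⟨j', h⟩
        · by_cases hm : ∃ i', (i', j) ∈ M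
          · obtain ⟨i', hi'⟩ := hm
            exact Or.inr ⟨i', hi', lt_of_not_ge fun h => hyj ⟨i', hi', h⟩⟩
          · exact Or.inl fun i' h => hm ⟨i', h⟩
  · intro h
    refine ⟨hM, fun i j hA hijM ⟨hb1, hb2⟩ => ?_⟩
    have hineq := h i j hA
    rw [hy, hy'] at hineq
    have hyi : ¬ ∃ j'', (i, j'') ∈ M ∧ r i j'' ≤ r i j := by
      rintro ⟨j'', hj'', hle⟩
      rcases hb1 with h1 | ⟨j', hj', hlt⟩
      · exact h1 j'' hj''
      · have heq : (i, j'') = (i, j') := hM.2.1 _ hj'' _ hj' rfl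
        rw [Prod.mk.injEq] at heq
        rw [heq.2] at hle; omega
    have hyj : ¬ ∃ i'', (i'', j) ∈ M ∧ r' i'' j ≤ r' i j := by
      rintro ⟨i'', hi'', hle⟩
      rcases hb2 with h2 | ⟨i', hi', hlt⟩
      · exact h2 i'' hi''
      · have heq : (i'', j) = (i', j) := hM.2.2 _ hi'' _ hi' rfl
        rw [Prod.mk.injEq] at heq
        rw [heq.1] at hle; omega
    simp only [hyi, hyj, if_false] at hineq
    omega
end

section
/- Let M be a stable matching in an SMTI instance, and define y_{ik} = 1 if child i is matched in M to a family j'' with r(i,j'') ≤ k (else 0) and y'_{jk} = 1 if family j is matched in M to a child i'' with r'(i'',j) ≤ k (else 0). Then for every family j and every positive integer k, writing C_k(j) = { i ∈ C : (i,j) ∈ A and r'(i,j) = k }, the double stability constraint |C_k(j)| · (1 − y'_{jk}) ≤ Σ_{i ∈ C_k(j)} y_{i, r(i,j)} holds. -/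
/-- validity of the double stability constraints (15).  If `M` is a
stable matching and `y`, `y'` are its rank-indicator variables, then for every family `j`
and positive integer `k`, with `C_k(j) = { i : (i, j) ∈ A ∧ r'(i, j) = k }`, the constraint
`|C_k(j)| · (1 - y'_{jk}) ≤ Σ_{i ∈ C_k(j)} y_{i, r(i,j)}` holds. -/
theorem double_stability_constraints_valid {C F : Type*} [Fintype C] [Fintype F]
    [DecidableEq C] [DecidableEq F]
    (A : Finset (C × F)) (r r' : C → F → ℕ)
    (hr : ∀ p ∈ A, 1 ≤ r p.1 p.2) (hr' : ∀ p ∈ A, 1 ≤ r' p.1 p.2)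
    (M : Finset (C × F)) (hM : IsStable A r r' M)
    (y : C → ℕ → ℤ) (y' : F → ℕ → ℤ)
    (hy : ∀ i k, y i k = if ∃ j'', (i, j'') ∈ M ∧ r i j'' ≤ k then 1 else 0)
    (hy' : ∀ j k, y' j k = if ∃ i'', (i'', j) ∈ M ∧ r' i'' j ≤ k then 1 else 0) :
    ∀ (j : F) (k : ℕ), 1 ≤ k →
      ((Finset.univ.filter fun i => (i, j) ∈ A ∧ r' i j = k).card : ℤ) * (1 - y' j k)
        ≤ ∑ i ∈ Finset.univ.filter fun i => (i, j) ∈ A ∧ r' i j = k, y i (r i j) := by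
  intro j k hk
  by_cases h : ∃ i'', (i'', j) ∈ M ∧ r' i'' j ≤ k
  · have : y' j k = 1 := by rw [hy']; simp [h]
    rw [this]
    simp only [sub_self, mul_zero]
    apply Finset.sum_nonneg
    intro i _
    rw [hy]
    split <;> norm_num
  · have hy0 : y' j k = 0 := by rw [hy']; simp [h]
    rw [hy0]
    have key : ∀ i ∈ Finset.univ.filter fun i => (i, j) ∈ A ∧ r' i j = k,
        y i (r i j) = 1 := by
      intro i hi
      simp only [Finset.mem_filter] at hi
      obtain ⟨_, hiA, hik⟩ := hi
      have hnM : (i, j) ∉ M := fun hmem => h ⟨i, hmem, hik.le⟩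
      have hnb := hM.2 i j hiA hnM
      rw [hy]
      rw [if_pos]
      by_contra hc
      push_neg at hc
      apply hnb
      constructor
      · by_cases hm : ∃ j', (i, j') ∈ M
        · obtain ⟨j', hj'⟩ := hm
          exact Or.inr ⟨j', hj', hc j' hj'⟩
        · push_neg at hm
          exact Or.inl hm
      · by_cases hm : ∃ i', (i', j) ∈ M
        · obtain ⟨i', hi'⟩ := hm
          refine Or.inr ⟨i', hi', ?_⟩
          have : ¬ r' i' j ≤ k := fun hle => h ⟨i', hi', hle⟩
          omega
        · push_neg at hm
          exact Or.inl hm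
    rw [Finset.sum_congr rfl key]
    simp
end

section
/- Let M be a matching in an HRT instance, and for each doctor i and positive integer k let y_{ik} = 1 if i is matched in M to a hospital h with r(i,h) ≤ k (else 0). For each hospital j let K_j = max{ r'(i,j) : (i,j) ∈ A }. Then M is stable if and only if there exist values z_{jk} ∈ {0,1} (for each hospital j and each k ∈ {1,…,K_j+1}) such that: (i) for every (i,j) ∈ M, z_{j, r'(i,j)} = 0; (ii) z_{j,k−1} ≤ z_{jk} for all j and 2 ≤ k ≤ K_j+1; (iii) for every acceptable pair (i,j) ∈ A, 1 − z_{j, r'(i,j)+1} ≤ y_{i, r(i,j)}; and (iv) for every hospital j, if z_{j, K_j+1} = 1 then |M(j)| = c_j. Moreover, when M is stable, such values are given by z_{jk} = 1 iff |{ d ∈ M(j) : r'(d,j) ≤ k−1 }| = c_j. -/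
/-- A matching in an HRT instance: a subset of the acceptable pairs `A` in which each
doctor appears in at most one pair and each hospital `j` appears in at most `c j` pairs. -/
def HRTMatching {D H : Type*} [DecidableEq H] (A : Finset (D × H)) (c : H → ℕ)
    (M : Finset (D × H)) : Prop :=
  M ⊆ A ∧
  (∀ p ∈ M, ∀ q ∈ M, p.1 = q.1 → p = q) ∧
  (∀ j, (M.filter fun p => p.2 = j).card ≤ c j)

/-- The acceptable pair `(i, j)` blocks the matching `M` in the HRT instance. -/
def HRTBlocks {D H : Type*} [DecidableEq H] (c : H → ℕ) (r r' : D → H → ℕ)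
    (M : Finset (D × H)) (i : D) (j : H) : Prop :=
  ((∀ h, (i, h) ∉ M) ∨ ∃ h, (i, h) ∈ M ∧ r i j < r i h) ∧
  ((M.filter fun p => p.2 = j).card < c j ∨ ∃ p ∈ M, p.2 = j ∧ r' i j < r' p.1 j)

/-- `M` is a stable matching of the HRT instance. -/
def HRTStable {D H : Type*} [DecidableEq H] (A : Finset (D × H)) (c : H → ℕ)
    (r r' : D → H → ℕ) (M : Finset (D × H)) : Prop :=
  HRTMatching A c M ∧ ∀ i j, (i, j) ∈ A → (i, j) ∉ M → ¬ HRTBlocks c r r' M i j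

/-- The canonical witness for the `z` variables of a stable matching:
`z j k = 1` iff hospital `j` has filled its capacity `c j` with doctors of rank at most
`k - 1`. -/
def zWitness {D H : Type*} [DecidableEq H] (M : Finset (D × H)) (c : H → ℕ)
    (r' : D → H → ℕ) (j : H) (k : ℕ) : ℤ :=
  if (M.filter fun p => p.2 = j ∧ r' p.1 j ≤ k - 1).card = c j then 1 else 0

section Aux

variable {D H : Type*} [DecidableEq D] [DecidableEq H]

lemma zw01 (M : Finset (D × H)) (c : H → ℕ) (r' : D → H → ℕ) (j : H) (k : ℕ) :
    zWitness M c r' j k = 0 ∨ zWitness M c r' j k = 1 := by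
  unfold zWitness; split <;> simp

lemma zw_nonneg (M : Finset (D × H)) (c : H → ℕ) (r' : D → H → ℕ) (j : H) (k : ℕ) :
    0 ≤ zWitness M c r' j k := by
  unfold zWitness; split <;> simp

lemma zw_filter_subset (M : Finset (D × H)) (r' : D → H → ℕ) (j : H) (m : ℕ) :
    (M.filter fun p => p.2 = j ∧ r' p.1 j ≤ m) ⊆ M.filter fun p => p.2 = j := by
  intro p hp
  simp only [Finset.mem_filter] at *
  exact ⟨hp.1, hp.2.1⟩

lemma zw_full (M : Finset (D × H)) (c : H → ℕ) (r' : D → H → ℕ) (j : H) (k : ℕ)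
    (hcap : (M.filter fun p => p.2 = j).card ≤ c j)
    (h : zWitness M c r' j k = 1) : (M.filter fun p => p.2 = j).card = c j := by
  unfold zWitness at h
  split at h
  · rename_i hcard
    exact le_antisymm hcap (hcard ▸ Finset.card_le_card (zw_filter_subset M r' j _))
  · simp at h

lemma zw_mem_zero (A : Finset (D × H)) (c : H → ℕ) (r' : D → H → ℕ)
    (M : Finset (D × H)) (hMA : M ⊆ A)
    (hcap : ∀ j, (M.filter fun p => p.2 = j).card ≤ c j)
    (hr' : ∀ p ∈ A, 1 ≤ r' p.1 p.2)
    (i : D) (j : H) (hij : (i, j) ∈ M) : zWitness M c r' j (r' i j) = 0 := by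
  have h1 : 1 ≤ r' i j := hr' (i, j) (hMA hij)
  unfold zWitness
  have hss : (M.filter fun p => p.2 = j ∧ r' p.1 j ≤ r' i j - 1) ⊂
      M.filter fun p => p.2 = j := by
    refine Finset.ssubset_iff_of_subset (zw_filter_subset M r' j _) |>.mpr ⟨(i, j), ?_, ?_⟩
    · simp [hij]
    · simp only [Finset.mem_filter]
      rintro ⟨-, -, hle⟩
      omega
  have : (M.filter fun p => p.2 = j ∧ r' p.1 j ≤ r' i j - 1).card <
      (M.filter fun p => p.2 = j).card := Finset.card_lt_card hss
  have := hcap j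
  split
  · omega
  · rfl

lemma zw_mono (M : Finset (D × H)) (c : H → ℕ) (r' : D → H → ℕ) (j : H) (k : ℕ)
    (hcap : (M.filter fun p => p.2 = j).card ≤ c j) (hk : 2 ≤ k) :
    zWitness M c r' j (k - 1) ≤ zWitness M c r' j k := by
  rcases zw01 M c r' j (k - 1) with h | h
  · rw [h]; exact zw_nonneg M c r' j k
  · rw [h]
    unfold zWitness at h ⊢
    split at h
    · rename_i hcard
      have hss : (M.filter fun p => p.2 = j ∧ r' p.1 j ≤ (k - 1) - 1) ⊆
          M.filter fun p => p.2 = j ∧ r' p.1 j ≤ k - 1 := by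
        intro p hp
        simp only [Finset.mem_filter] at *
        exact ⟨hp.1, hp.2.1, by omega⟩
      have h1 : c j ≤ (M.filter fun p => p.2 = j ∧ r' p.1 j ≤ k - 1).card :=
        hcard ▸ Finset.card_le_card hss
      have h2 : (M.filter fun p => p.2 = j ∧ r' p.1 j ≤ k - 1).card ≤
          (M.filter fun p => p.2 = j).card := Finset.card_le_card (zw_filter_subset M r' j _)
      split
      · rfl
      · omega
    · simp at h

lemma z_chain (z : ℕ → ℤ) (N : ℕ) (hmono : ∀ k, 2 ≤ k → k ≤ N → z (k - 1) ≤ z k)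
    (a b : ℕ) (ha : 1 ≤ a) (hab : a ≤ b) (hb : b ≤ N) : z a ≤ z b := by
  induction b, hab using Nat.le_induction with
  | base => exact le_refl _
  | succ n hn ih =>
      refine le_trans (ih (by omega)) ?_
      have := hmono (n + 1) (by omega) hb
      simpa using this

end Aux

/-- correctness of the alternative HRT stability constraints
(17)–(20).  With `y_{ik} = 1` iff doctor `i` is matched in `M` at rank at most `k`, and
`K_j = max { r'(i,j) : (i,j) ∈ A }`, the matching `M` is stable iff there exist 0/1
values `z_{jk}` (for `1 ≤ k ≤ K_j + 1`) such that (i) `z_{j, r'(i,j)} = 0` for every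
`(i,j) ∈ M`; (ii) `z_{j,k-1} ≤ z_{jk}`; (iii) `1 - z_{j, r'(i,j)+1} ≤ y_{i, r(i,j)}` for
every `(i,j) ∈ A`; (iv) if `z_{j, K_j+1} = 1` then `|M(j)| = c_j`.  Moreover, when `M`
is stable, such values are given by `z_{jk} = 1` iff
`|{ d ∈ M(j) : r'(d,j) ≤ k - 1 }| = c_j`. -/
theorem hrt_z_stability_constraints_correct {D H : Type*} [Fintype H]
    [DecidableEq D] [DecidableEq H]
    (A : Finset (D × H)) (c : H → ℕ) (r r' : D → H → ℕ)
    (hc : ∀ j, 1 ≤ c j)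
    (hr : ∀ p ∈ A, 1 ≤ r p.1 p.2) (hr' : ∀ p ∈ A, 1 ≤ r' p.1 p.2)
    (M : Finset (D × H)) (hM : HRTMatching A c M)
    (y : D → ℕ → ℤ)
    (hy : ∀ i k, y i k = if ∃ h, (i, h) ∈ M ∧ r i h ≤ k then 1 else 0)
    (K : H → ℕ)
    (hK : ∀ j, K j = (A.filter fun p => p.2 = j).sup fun p => r' p.1 p.2) :
    (HRTStable A c r r' M ↔ ∃ z : H → ℕ → ℤ,
      (∀ j k, 1 ≤ k → k ≤ K j + 1 → z j k = 0 ∨ z j k = 1) ∧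
      (∀ i j, (i, j) ∈ M → z j (r' i j) = 0) ∧
      (∀ j k, 2 ≤ k → k ≤ K j + 1 → z j (k - 1) ≤ z j k) ∧
      (∀ i j, (i, j) ∈ A → 1 - z j (r' i j + 1) ≤ y i (r i j)) ∧
      (∀ j, z j (K j + 1) = 1 → (M.filter fun p => p.2 = j).card = c j)) ∧
    (HRTStable A c r r' M →
      (∀ j k, 1 ≤ k → k ≤ K j + 1 → zWitness M c r' j k = 0 ∨ zWitness M c r' j k = 1) ∧
      (∀ i j, (i, j) ∈ M → zWitness M c r' j (r' i j) = 0) ∧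
      (∀ j k, 2 ≤ k → k ≤ K j + 1 → zWitness M c r' j (k - 1) ≤ zWitness M c r' j k) ∧
      (∀ i j, (i, j) ∈ A → 1 - zWitness M c r' j (r' i j + 1) ≤ y i (r i j)) ∧
      (∀ j, zWitness M c r' j (K j + 1) = 1 →
        (M.filter fun p => p.2 = j).card = c j)) := by
  obtain ⟨hMA, hdoc, hcap⟩ := hM
  have zwprops : HRTStable A c r r' M →
      (∀ j k, 1 ≤ k → k ≤ K j + 1 → zWitness M c r' j k = 0 ∨ zWitness M c r' j k = 1) ∧
      (∀ i j, (i, j) ∈ M → zWitness M c r' j (r' i j) = 0) ∧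
      (∀ j k, 2 ≤ k → k ≤ K j + 1 → zWitness M c r' j (k - 1) ≤ zWitness M c r' j k) ∧
      (∀ i j, (i, j) ∈ A → 1 - zWitness M c r' j (r' i j + 1) ≤ y i (r i j)) ∧
      (∀ j, zWitness M c r' j (K j + 1) = 1 →
        (M.filter fun p => p.2 = j).card = c j) := by
    intro hstab
    refine ⟨fun j k _ _ => zw01 M c r' j k,
      fun i j hij => zw_mem_zero A c r' M hMA hcap hr' i j hij,
      fun j k h2 _ => zw_mono M c r' j k (hcap j) h2,
      ?_, fun j h => zw_full M c r' j _ (hcap j) h⟩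
    intro i j hijA
    by_cases hex : ∃ h, (i, h) ∈ M ∧ r i h ≤ r i j
    · have hy1 : y i (r i j) = 1 := by rw [hy, if_pos hex]
      rw [hy1]
      have := zw_nonneg M c r' j (r' i j + 1)
      linarith
    · have hy0 : y i (r i j) = 0 := by rw [hy, if_neg hex]
      rw [hy0]
      have hnM : (i, j) ∉ M := fun hmem => hex ⟨j, hmem, le_refl _⟩
      have hnb := hstab.2 i j hijA hnM
      have hA : (∀ h, (i, h) ∉ M) ∨ ∃ h, (i, h) ∈ M ∧ r i j < r i h := by
        by_cases hu : ∀ h, (i, h) ∉ M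
        · exact Or.inl hu
        · push_neg at hu
          obtain ⟨h, hh⟩ := hu
          refine Or.inr ⟨h, hh, ?_⟩
          by_contra hle
          exact hex ⟨h, hh, by omega⟩
      have hb : ¬ ((M.filter fun p => p.2 = j).card < c j ∨
          ∃ p ∈ M, p.2 = j ∧ r' i j < r' p.1 j) := fun hb => hnb ⟨hA, hb⟩
      push_neg at hb
      obtain ⟨hfull, hrank⟩ := hb
      have hcardeq : (M.filter fun p => p.2 = j).card = c j := le_antisymm (hcap j) hfull
      have hsets : (M.filter fun p => p.2 = j ∧ r' p.1 j ≤ (r' i j + 1) - 1) =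
          M.filter fun p => p.2 = j := by
        apply Finset.Subset.antisymm (zw_filter_subset M r' j _)
        intro p hp
        simp only [Finset.mem_filter] at hp ⊢
        exact ⟨hp.1, hp.2, by have := hrank p hp.1 hp.2; omega⟩
      unfold zWitness
      rw [hsets, if_pos hcardeq]
      norm_num
  refine ⟨⟨fun hstab => ⟨zWitness M c r', zwprops hstab⟩, ?_⟩, zwprops⟩
  rintro ⟨z, hz01, hzM, hzmono, hzA, hzfull⟩
  refine ⟨⟨hMA, hdoc, hcap⟩, fun i j hijA hnM hblk => ?_⟩
  obtain ⟨hba, hbb⟩ := hblk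
  have hy0 : y i (r i j) = 0 := by
    rw [hy, if_neg]
    rintro ⟨h, hhM, hle⟩
    rcases hba with hu | ⟨h', hh'M, hlt⟩
    · exact hu h hhM
    · have heq : h = h' := congrArg Prod.snd (hdoc _ hhM _ hh'M rfl)
      rw [heq] at hle
      omega
  have hrK : r' i j ≤ K j := by
    rw [hK]
    have hmemf : (i, j) ∈ A.filter fun p => p.2 = j := Finset.mem_filter.mpr ⟨hijA, rfl⟩
    exact Finset.le_sup (f := fun p => r' p.1 p.2) hmemf
  have hz1 : (1 : ℤ) ≤ z j (r' i j + 1) := by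
    have := hzA i j hijA
    rw [hy0] at this
    linarith
  rcases hbb with hlt | ⟨p, hpM, hpj, hplt⟩
  · have hle : z j (r' i j + 1) ≤ z j (K j + 1) :=
      z_chain (z j) (K j + 1) (hzmono j) (r' i j + 1) (K j + 1)
        (by omega) (by omega) le_rfl
    rcases hz01 j (K j + 1) (by omega) le_rfl with h | h
    · linarith
    · have := hzfull j h
      omega
  · have hpA := hMA hpM
    have hpK : r' p.1 j ≤ K j := by
      rw [hK]
      have : r' p.1 p.2 ≤ (A.filter fun q => q.2 = j).sup fun q => r' q.1 q.2 :=
        Finset.le_sup (f := fun q => r' q.1 q.2)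
          (show p ∈ A.filter fun q => q.2 = j from Finset.mem_filter.mpr ⟨hpA, hpj⟩)
      rwa [hpj] at this
    have hmem : (p.1, j) ∈ M := by rw [← hpj]; exact hpM
    have hz0 : z j (r' p.1 j) = 0 := hzM p.1 j hmem
    have hle : z j (r' i j + 1) ≤ z j (r' p.1 j) :=
      z_chain (z j) (K j + 1) (hzmono j) (r' i j + 1) (r' p.1 j)
        (by omega) (by omega) (by omega)
    linarith
end

section
/- There exists an SMTI-GRP instance that admits two stable matchings M1 and M2 with |M1| = 4, w(M1) = 10, |M2| = 3 and w(M2) = 11; hence in SMTI-GRP a maximum weight stable matching may have strictly smaller size than a maximum size stable matching. A witnessing instance has children C = {c1,c2,c3,c4}, families F = {f1,f2,f3,f4}, acceptable pairs X = {(c_i,f_i) : 1 ≤ i ≤ 4} ∪ {(c_{i+1},f_i) : 1 ≤ i ≤ 3}, weights w(c1,f1)=1, w(c2,f1)=4, w(c2,f2)=4, w(c3,f2)=3, w(c3,f3)=4, w(c4,f3)=4, w(c4,f4)=1, and stable matchings M1 = {(c_i,f_i) : 1 ≤ i ≤ 4} and M2 = {(c_{i+1},f_i) : 1 ≤ i ≤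 3}. -/
/-- A matching in an SMTI-GRP instance with acceptable pairs `X`: a subset of `X` in
which each child and each family appears in at most one pair. -/
def GRPMatching {C F : Type*} (X M : Finset (C × F)) : Prop :=
  M ⊆ X ∧
  (∀ p ∈ M, ∀ q ∈ M, p.1 = q.1 → p = q) ∧
  (∀ p ∈ M, ∀ q ∈ M, p.2 = q.2 → p = q)

/-- The acceptable pair `(c, f)` blocks the matching `M` in the SMTI-GRP instance, where
preferences are derived from the weights (higher weight is preferred). -/
def GRPBlocks {C F : Type*} (w : C → F → ℝ) (M : Finset (C × F)) (c : C) (f : F) : Prop :=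
  ((∀ f', (c, f') ∉ M) ∨ ∃ f', (c, f') ∈ M ∧ w c f' < w c f) ∧
  ((∀ c', (c', f) ∉ M) ∨ ∃ c', (c', f) ∈ M ∧ w c' f < w c f)

/-- `M` is a stable matching of the SMTI-GRP instance `(X, w)`. -/
def GRPStable {C F : Type*} (X : Finset (C × F)) (w : C → F → ℝ)
    (M : Finset (C × F)) : Prop :=
  GRPMatching X M ∧ ∀ c f, (c, f) ∈ X → (c, f) ∉ M → ¬ GRPBlocks w M c f

def wn : Fin 4 → Fin 4 → ℕ
  | 0, 0 => 1 | 1, 0 => 4 | 1, 1 => 4 | 2, 1 => 3 | 2, 2 => 4 | 3, 2 => 4 | 3, 3 => 1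
  | _, _ => 0

lemma blocks_iff (M : Finset (Fin 4 × Fin 4)) (c f : Fin 4) :
    GRPBlocks (fun c f => (wn c f : ℝ)) M c f ↔
      ((∀ f', (c, f') ∉ M) ∨ ∃ f', (c, f') ∈ M ∧ wn c f' < wn c f) ∧
      ((∀ c', (c', f) ∉ M) ∨ ∃ c', (c', f) ∈ M ∧ wn c' f < wn c f) := by
  simp [GRPBlocks, Nat.cast_lt]

/-- Example 2 of the paper.  There is an SMTI-GRP instance with two
stable matchings `M1`, `M2` with `|M1| = 4`, `w(M1) = 10`, `|M2| = 3`, `w(M2) = 11`;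
hence a maximum weight stable matching may be strictly smaller in size than a maximum
size stable matching.  A witnessing instance has children `c1, …, c4`, families
`f1, …, f4`, acceptable pairs `X = {(c_i, f_i) : 1 ≤ i ≤ 4} ∪ {(c_{i+1}, f_i) : 1 ≤ i ≤ 3}`,
the stated weights, and `M1 = {(c_i, f_i)}`, `M2 = {(c_{i+1}, f_i)}`. -/
theorem max_weight_smaller_than_max_size :
    ∃ (X : Finset (Fin 4 × Fin 4)) (w : Fin 4 → Fin 4 → ℝ)
      (M1 M2 : Finset (Fin 4 × Fin 4)),
      X = {(0, 0), (1, 1), (2, 2), (3, 3), (1, 0), (2, 1), (3, 2)} ∧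
      w 0 0 = 1 ∧ w 1 0 = 4 ∧ w 1 1 = 4 ∧ w 2 1 = 3 ∧ w 2 2 = 4 ∧ w 3 2 = 4 ∧
      w 3 3 = 1 ∧
      M1 = {(0, 0), (1, 1), (2, 2), (3, 3)} ∧
      M2 = {(1, 0), (2, 1), (3, 2)} ∧
      GRPStable X w M1 ∧ GRPStable X w M2 ∧
      M1.card = 4 ∧ (∑ p ∈ M1, w p.1 p.2) = 10 ∧
      M2.card = 3 ∧ (∑ p ∈ M2, w p.1 p.2) = 11 := by
  refine ⟨{(0, 0), (1, 1), (2, 2), (3, 3), (1, 0), (2, 1), (3, 2)},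
    fun c f => (wn c f : ℝ),
    {(0, 0), (1, 1), (2, 2), (3, 3)}, {(1, 0), (2, 1), (3, 2)},
    rfl, by norm_num [wn], by norm_num [wn], by norm_num [wn], by norm_num [wn],
    by norm_num [wn], by norm_num [wn], by norm_num [wn], rfl, rfl, ?_, ?_, by decide, ?_, by decide, ?_⟩
  · refine ⟨⟨by decide, by decide, by decide⟩, ?_⟩
    intro c f hX hM hB
    rw [blocks_iff] at hB
    revert hX hM hB; revert c f; decide
  · refine ⟨⟨by decide, by decide, by decide⟩, ?_⟩
    intro c f hX hM hB
    rw [blocks_iff] at hB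
    revert hX hM hB; revert c f; decide
  · have h : (∑ x ∈ ({(0,0),(1,1),(2,2),(3,3)} : Finset (Fin 4 × Fin 4)), wn x.1 x.2) = 10 := by
      decide
    beta_reduce
    exact_mod_cast h
  · have h : (∑ x ∈ ({(1,0),(2,1),(3,2)} : Finset (Fin 4 × Fin 4)), wn x.1 x.2) = 11 := by
      decide
    beta_reduce
    exact_mod_cast h
end
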